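/- Fix 0 < R < 1 and 0 < μ ≤ 1−R, and let 0 < ℓ < 1 with ℓ > μ. Along any sequence of n for which μn divides (1−R)n, the average SS weight distribution of the redundant random ensemble satisfies lim_{n→∞} (1/n) log₂ S_{ℓn}^{R_{(1−R)n,n}^{(μn)}} = H(ℓ), where H is the binary entropy function. -/

import Mathlib

open Filter

/-- The binary entropy function. -/
noncomputable def binH (x : ℝ) : ℝ := -x * Real.logb 2 x - (1 - x) * Real.logb 2 (1 - x)

/-- Integer inner product of two F₂-vectors (viewed as 0/1 vectors). -/
def ip2 {n : ℕ} (h x : Fin n → ZMod 2) : ℕ :=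
  ∑ j, if h j = 1 ∧ x j = 1 then 1 else 0

/-- Hamming weight of a vector over F₂. -/
def wt2 {n : ℕ} (x : Fin n → ZMod 2) : ℕ :=
  (Finset.univ.filter fun j => x j = 1).card

/-- Average SS weight distribution, at weight `w`, of the redundant random ensemble
`R_{m,n}^{(L)}`: the underlying matrix consists of `m / L` independent uniformly random
blocks of `L` rows each, and the extended matrix consists of all nonzero F₂-linear
combinations of the rows within each block.  `x` is an SS vector of the extended matrix
iff no such combination has integer inner product 1 with `x`. -/
noncomputable def avgSSredundant (m L n w : ℕ) : ℝ :=
  (∑ H : Fin (m / L) → Fin L → Fin n → ZMod 2,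
      ((Finset.univ.filter fun x : Fin n → ZMod 2 =>
          wt2 x = w ∧ ∀ b : Fin (m / L), ∀ a : Fin L → ZMod 2, a ≠ 0 →
            ip2 (fun j => ∑ i, a i * H b i j) x ≠ 1).card : ℝ))
    / 2 ^ (m * n)

/-!
Fix a vector `x` of weight `w`. A uniformly random block of `L` rows spoils `x` only if some
nonzero combination `a` of its rows has inner product `1` with `x`; each such combination is a
uniformly random vector, so this happens with probability `w 2^{-w}` for each of the `2^L - 1`
choices of `a`. The blocks are independent, so the average is `∑_{wt x = w} p_x^{m/L}` with
`1 - (2^L - 1) w 2^{-w} ≤ p_x ≤ 1`, and Bernoulli's inequality squeezes it between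
`C(n,w) (1 - (m/L)(2^L - 1) w 2^{-w})` and `C(n,w)`. For `ℓ > μ` the error term is at most
`2 n² 2^{(μ-ℓ)n} → 0`, so `(1/n) log₂` of the average has the limit of `(1/n) log₂ C(n, ⌊ℓn⌋)`,
which is `H(ℓ)` because the largest term `C(n,w) w^w (n-w)^{n-w}` of the expansion of
`(w + (n - w))^n = n^n` is at least `n^n / (n + 1)`.
-/

open Finset Real Topology

lemma card_filter_card_filter_eq_one_eq_choose {ι : Type*} [Fintype ι] [DecidableEq ι] (k : ℕ) :
    #{x : ι → ZMod 2 | #{j | x j = 1} = k} = (Fintype.card ι).choose k := by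
  rw [← card_univ, ← card_powersetCard]
  refine card_nbij' (fun x => ({j | x j = 1} : Finset ι)) (fun s j => if j ∈ s then 1 else 0)
    ?_ ?_ ?_ ?_
  · intro x hx
    simpa [mem_powersetCard] using hx
  · intro s hs
    simp only [mem_coe, mem_powersetCard, mem_filter, mem_univ, true_and] at hs ⊢
    convert hs.2
    ext j; by_cases j ∈ s <;> simp_all
  · intro x _
    funext j
    simp only [mem_filter, mem_univ, true_and]
    generalize x j = a
    revert a; decide
  · intro s _
    ext j; by_cases j ∈ s <;> simp_all

lemma card_wt2_eq (n w : ℕ) : #{x : Fin n → ZMod 2 | wt2 x = w} = n.choose w :=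
  (card_filter_card_filter_eq_one_eq_choose w).trans (by rw [Fintype.card_fin])

lemma card_ip2_eq_one {n : ℕ} (x : Fin n → ZMod 2) :
    #{h : Fin n → ZMod 2 | ip2 h x = 1} = wt2 x * 2 ^ (n - wt2 x) := by
  let p : Fin n → Prop := fun j => x j = 1
  let e := Equiv.piEquivPiSubtypeProd p fun _ => ZMod 2
  have hip : ∀ h, ip2 h x = #{j | (e h).1 j = 1} := by
    intro h
    rw [ip2, ← card_filter, ← Fintype.card_subtype, ← Fintype.card_subtype]
    exact Fintype.card_congr ((Equiv.subtypeEquivRight fun _ => and_comm).trans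
      (Equiv.subtypeSubtypeEquivSubtypeInter p fun j => h j = 1).symm)
  let Q : (Subtype p → ZMod 2) → Prop := fun a => #{j | a j = 1} = 1
  calc #{h : Fin n → ZMod 2 | ip2 h x = 1}
      = Fintype.card {y : (Subtype p → ZMod 2) × ({j // ¬p j} → ZMod 2) // Q y.1} := by
        rw [← Fintype.card_subtype]
        exact Fintype.card_congr (e.subtypeEquiv fun h => by rw [hip])
    _ = Fintype.card {a // Q a} * Fintype.card ({j // ¬p j} → ZMod 2) := by
        rw [Fintype.card_congr Equiv.prodSubtypeFstEquivSubtypeProd, Fintype.card_prod]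
    _ = wt2 x * 2 ^ (n - wt2 x) := by
        rw [Fintype.card_subtype, card_filter_card_filter_eq_one_eq_choose, Fintype.card_fun,
          Fintype.card_subtype_compl, Fintype.card_subtype]
        simp [wt2]

lemma card_filter_sum_smul_mul_card_le {K V ι : Type*} [Field K] [AddCommGroup V] [Module K V]
    [Fintype V] [Fintype ι] [DecidableEq ι] {a : ι → K} (ha : a ≠ 0)
    (P : V → Prop) [DecidablePred P] :
    #{H : ι → V | P (∑ i, a i • H i)} * Fintype.card V
      ≤ Fintype.card V ^ Fintype.card ι * #{v | P v} := by
  obtain ⟨i₀, hi₀⟩ : ∃ i₀, a i₀ ≠ 0 := Function.ne_iff.mp ha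
  let f : (ι → V) → V × ({i // i ≠ i₀} → V) := fun H => (∑ i, a i • H i, fun i => H i)
  have hinj : Function.Injective f := by
    intro H H' hHH'
    simp only [f, Prod.mk.injEq, funext_iff, Subtype.forall] at hHH'
    obtain ⟨hsum, hoff⟩ := hHH'
    have hrest : ∑ i : {i // i ≠ i₀}, a i • H i = ∑ i : {i // i ≠ i₀}, a i • H' i :=
      sum_congr rfl fun i _ => by rw [hoff i i.2]
    rw [Fintype.sum_eq_add_sum_subtype_ne _ i₀, Fintype.sum_eq_add_sum_subtype_ne _ i₀, hrest,
      add_left_inj] at hsum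
    funext i
    by_cases hi : i = i₀
    · subst hi; exact smul_right_injective V hi₀ hsum
    · exact hoff i hi
  have hcard : #{H : ι → V | P (∑ i, a i • H i)}
      ≤ #((univ.filter P) ×ˢ (univ : Finset ({i // i ≠ i₀} → V))) :=
    card_le_card_of_injOn f (fun H hH => by simpa [f] using hH) hinj.injOn
  have hι : Fintype.card ι = Fintype.card {i // i ≠ i₀} + 1 := by
    rw [Fintype.card_subtype_compl, Fintype.card_subtype_eq,
      Nat.sub_add_cancel (Fintype.card_pos_iff.2 ⟨i₀⟩)]
  calc #{H : ι → V | P (∑ i, a i • H i)} * Fintype.card V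
      ≤ #{v | P v} * Fintype.card V ^ Fintype.card {i // i ≠ i₀} * Fintype.card V := by
        rw [card_product, card_univ, Fintype.card_fun] at hcard
        exact Nat.mul_le_mul_right _ hcard
    _ = Fintype.card V ^ Fintype.card ι * #{v | P v} := by rw [hι, pow_succ]; ring

def IsSSVectorOfSpan {L n : ℕ} (H : Fin L → Fin n → ZMod 2) (x : Fin n → ZMod 2) : Prop :=
  ∀ a : Fin L → ZMod 2, a ≠ 0 → ip2 (fun j => ∑ i, a i * H i j) x ≠ 1

instance {L n : ℕ} (H : Fin L → Fin n → ZMod 2) (x : Fin n → ZMod 2) :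
    Decidable (IsSSVectorOfSpan H x) := by
  unfold IsSSVectorOfSpan; infer_instance

lemma card_ip2_comb_eq_one_mul_le {L n : ℕ} (x : Fin n → ZMod 2) {a : Fin L → ZMod 2}
    (ha : a ≠ 0) :
    #{H : Fin L → Fin n → ZMod 2 | ip2 (fun j => ∑ i, a i * H i j) x = 1} * 2 ^ wt2 x
      ≤ wt2 x * 2 ^ (L * n) := by
  have hcomb : ∀ H : Fin L → Fin n → ZMod 2, (fun j => ∑ i, a i * H i j) = ∑ i, a i • H i := by
    intro H; ext j; simp [Finset.sum_apply]
  have key := card_filter_sum_smul_mul_card_le (V := Fin n → ZMod 2) ha fun v => ip2 v x = 1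
  simp only [← hcomb, card_ip2_eq_one, Fintype.card_fun, ZMod.card, Fintype.card_fin] at key
  have hw : wt2 x ≤ n := (card_filter_le _ _).trans_eq (card_fin n)
  refine Nat.le_of_mul_le_mul_right ?_ (Nat.two_pow_pos n)
  calc _ = _ * 2 ^ n * 2 ^ wt2 x := by ring
    _ ≤ (2 ^ n) ^ L * (wt2 x * 2 ^ (n - wt2 x)) * 2 ^ wt2 x := Nat.mul_le_mul_right _ key
    _ = wt2 x * 2 ^ (L * n) * 2 ^ n := by
      rw [← pow_mul, mul_comm n L, mul_assoc, mul_assoc, ← pow_add, Nat.sub_add_cancel hw]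
      ring

lemma card_not_isSSVectorOfSpan_mul_le {L n : ℕ} (x : Fin n → ZMod 2) :
    #{H : Fin L → Fin n → ZMod 2 | ¬IsSSVectorOfSpan H x} * 2 ^ wt2 x
      ≤ (2 ^ L - 1) * (wt2 x * 2 ^ (L * n)) := by
  have hsub : ({H | ¬IsSSVectorOfSpan H x} : Finset (Fin L → Fin n → ZMod 2))
      ⊆ (univ.erase 0).biUnion fun a : Fin L → ZMod 2 =>
          {H | ip2 (fun j => ∑ i, a i * H i j) x = 1} := by
    intro H hH
    simp only [IsSSVectorOfSpan, not_forall, not_not, mem_filter, mem_univ, true_and] at hH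
    obtain ⟨a, ha, hip⟩ := hH
    exact mem_biUnion.2 ⟨a, by simpa using ha, by simpa using hip⟩
  calc _ ≤ (∑ a ∈ univ.erase (0 : Fin L → ZMod 2),
        #{H : Fin L → Fin n → ZMod 2 | ip2 (fun j => ∑ i, a i * H i j) x = 1}) * 2 ^ wt2 x :=
        Nat.mul_le_mul_right _ ((card_le_card hsub).trans card_biUnion_le)
    _ ≤ ∑ _a ∈ univ.erase (0 : Fin L → ZMod 2), wt2 x * 2 ^ (L * n) := by
        rw [sum_mul]
        exact sum_le_sum fun a ha => card_ip2_comb_eq_one_mul_le x (ne_of_mem_erase ha)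
    _ = (2 ^ L - 1) * (wt2 x * 2 ^ (L * n)) := by
        simp [card_erase_of_mem]

noncomputable def blockSSProb (L n : ℕ) (x : Fin n → ZMod 2) : ℝ :=
  #{H : Fin L → Fin n → ZMod 2 | IsSSVectorOfSpan H x} / 2 ^ (L * n)

/-- `max (1 - ssErr L w) 0` is the paper's `A`. -/
noncomputable def ssErr (L w : ℕ) : ℝ := (2 ^ L - 1) * w / 2 ^ w

lemma ssErr_nonneg (L w : ℕ) : 0 ≤ ssErr L w := by
  unfold ssErr
  have : (1 : ℝ) ≤ 2 ^ L := one_le_pow₀ one_le_two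
  positivity

section BlockSSProb

variable {L n : ℕ} (x : Fin n → ZMod 2)

lemma card_isSSVectorOfSpan_add_card_not :
    (#{H : Fin L → Fin n → ZMod 2 | IsSSVectorOfSpan H x} : ℝ)
      + #{H : Fin L → Fin n → ZMod 2 | ¬IsSSVectorOfSpan H x} = 2 ^ (L * n) := by
  rw [← Nat.cast_add, card_filter_add_card_filter_not, card_univ]
  simp [← pow_mul, mul_comm]

lemma blockSSProb_nonneg : 0 ≤ blockSSProb L n x := by
  unfold blockSSProb; positivity

lemma blockSSProb_le_one : blockSSProb L n x ≤ 1 := by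
  rw [blockSSProb, div_le_one (by positivity), ← card_isSSVectorOfSpan_add_card_not x]
  exact le_add_of_nonneg_right (Nat.cast_nonneg _)

lemma one_sub_ssErr_le_blockSSProb : 1 - ssErr L (wt2 x) ≤ blockSSProb L n x := by
  have hbad : (#{H : Fin L → Fin n → ZMod 2 | ¬IsSSVectorOfSpan H x} : ℝ) * 2 ^ wt2 x
      ≤ (2 ^ L - 1) * (wt2 x * 2 ^ (L * n)) := by
    have h := card_not_isSSVectorOfSpan_mul_le (L := L) x
    rw [← Nat.cast_le (α := ℝ)] at h
    push_cast [Nat.one_le_two_pow] at h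
    exact h
  rw [blockSSProb, ssErr, eq_sub_of_add_eq (card_isSSVectorOfSpan_add_card_not x), sub_div,
    div_self (by positivity), sub_le_sub_iff_left, div_le_div_iff₀ (by positivity) (by positivity)]
  linarith

end BlockSSProb

lemma sum_card_filter_and_comm {α β : Type*} [Fintype α] [Fintype β] (P : α → Prop)
    (Q : β → α → Prop) [DecidablePred P] [∀ b, DecidablePred (Q b)] :
    ∑ b, #{a | P a ∧ Q b a} = ∑ a ∈ {a | P a}, #{b | Q b a} := by
  simp only [card_filter, sum_filter]
  rw [sum_comm]
  exact sum_congr rfl fun a _ => by split_ifs with h <;> simp [h]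

lemma avgSSredundant_eq_sum {m L n w : ℕ} (hm : L ∣ m) :
    avgSSredundant m L n w
      = ∑ x ∈ {x : Fin n → ZMod 2 | wt2 x = w}, blockSSProb L n x ^ (m / L) := by
  have hcount : ∀ x : Fin n → ZMod 2,
      #{H : Fin (m / L) → Fin L → Fin n → ZMod 2 | ∀ b, IsSSVectorOfSpan (H b) x}
        = #{G : Fin L → Fin n → ZMod 2 | IsSSVectorOfSpan G x} ^ (m / L) := by
    intro x
    rw [← Fintype.card_piFinset_const]
    congr 1; ext H; simp [Fintype.mem_piFinset]
  have hpow : (2 : ℝ) ^ (m * n) = (2 ^ (L * n)) ^ (m / L) := by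
    rw [← pow_mul, mul_right_comm, Nat.mul_div_cancel' hm]
  calc avgSSredundant m L n w
      = ((∑ H : Fin (m / L) → Fin L → Fin n → ZMod 2,
          #{x | wt2 x = w ∧ ∀ b, IsSSVectorOfSpan (H b) x} : ℕ) : ℝ) / (2 ^ (L * n)) ^ (m / L) := by
        rw [avgSSredundant, hpow, Nat.cast_sum]; rfl
    _ = _ := by
        rw [sum_card_filter_and_comm, Nat.cast_sum, sum_div]
        simp only [blockSSProb, div_pow, hcount, Nat.cast_pow]

section AvgBounds

variable {m L n w : ℕ}

lemma avgSSredundant_le_choose (hm : L ∣ m) : avgSSredundant m L n w ≤ n.choose w := by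
  rw [avgSSredundant_eq_sum hm, ← card_wt2_eq, ← nsmul_one]
  refine sum_le_card_nsmul _ _ _ fun x _ => ?_
  exact pow_le_one₀ (blockSSProb_nonneg x) (blockSSProb_le_one x)

lemma choose_mul_le_avgSSredundant (hm : L ∣ m) :
    n.choose w * (1 - (m / L : ℕ) * ssErr L w) ≤ avgSSredundant m L n w := by
  rw [avgSSredundant_eq_sum hm, ← card_wt2_eq, ← nsmul_eq_mul]
  refine card_nsmul_le_sum _ _ _ fun x hx => ?_
  rw [(mem_filter.1 hx).2.symm]
  have hp := one_sub_ssErr_le_blockSSProb (L := L) x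
  have hbern := one_add_mul_le_pow (a := blockSSProb L n x - 1)
    (by linarith [blockSSProb_nonneg (L := L) x]) (m / L)
  rw [add_sub_cancel] at hbern
  have hB : (0 : ℝ) ≤ (m / L : ℕ) := Nat.cast_nonneg _
  linarith [mul_le_mul_of_nonneg_left (sub_le_sub_right hp 1) hB]

end AvgBounds

section BinomialMaxTerm

variable {n w : ℕ}

lemma choose_mul_pow_mul_pow_le_add_pow (n k a b : ℕ) :
    n.choose k * a ^ k * b ^ (n - k) ≤ (a + b) ^ n := by
  rcases le_or_gt k n with hk | hk
  · rw [add_pow]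
    calc n.choose k * a ^ k * b ^ (n - k) = a ^ k * b ^ (n - k) * n.choose k := by ring
      _ ≤ _ := single_le_sum (f := fun k => a ^ k * b ^ (n - k) * n.choose k)
          (fun _ _ => Nat.zero_le _) (mem_range.2 (Nat.lt_succ_of_le hk))
  · simp [Nat.choose_eq_zero_of_lt hk]

lemma choose_succ_mul_pow_mul_pow_mul {k : ℕ} (hk : k < n) :
    n.choose (k + 1) * w ^ (k + 1) * (n - w) ^ (n - (k + 1)) * ((k + 1) * (n - w))
      = n.choose k * w ^ k * (n - w) ^ (n - k) * ((n - k) * w) := by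
  have hpow : (n - w) ^ (n - k) = (n - w) ^ (n - (k + 1)) * (n - w) := by
    rw [← pow_succ]; congr 1; omega
  rw [hpow, pow_succ]
  calc _ = (n.choose (k + 1) * (k + 1)) * w ^ k * w * (n - w) ^ (n - (k + 1)) * (n - w) := by ring
    _ = _ := by rw [Nat.choose_succ_right_eq]; ring

lemma choose_mul_pow_mul_pow_le_of_lt (hwn : w < n) (k : ℕ) :
    n.choose k * w ^ k * (n - w) ^ (n - k) ≤ n.choose w * w ^ w * (n - w) ^ (n - w) := by
  set t : ℕ → ℕ := fun k => n.choose k * w ^ k * (n - w) ^ (n - k)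
  have hpos : ∀ k, 0 < (k + 1) * (n - w) := fun k => Nat.mul_pos k.succ_pos (by omega)
  have hup : MonotoneOn t (Set.Iic w) := by
    refine monotoneOn_of_le_succ Set.ordConnected_Iic fun k _ _ hk1 => ?_
    simp only [Order.succ_eq_add_one, Set.mem_Iic] at hk1 ⊢
    refine Nat.le_of_mul_le_mul_right ?_ (hpos k)
    rw [choose_succ_mul_pow_mul_pow_mul (by omega)]
    exact Nat.mul_le_mul_left _ (Nat.mul_le_mul (by omega) (by omega) |>.trans_eq (mul_comm _ _))
  have hdown : AntitoneOn t {k | w ≤ k} := by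
    refine antitoneOn_nat_Ici_of_succ_le fun k hk => ?_
    rcases lt_or_ge k n with hkn | hkn
    · refine Nat.le_of_mul_le_mul_right ?_ (hpos k)
      rw [choose_succ_mul_pow_mul_pow_mul hkn]
      exact Nat.mul_le_mul_left _ (Nat.mul_le_mul (by omega) (by omega) |>.trans_eq (mul_comm _ _))
    · simp [t, Nat.choose_eq_zero_of_lt (Nat.lt_succ_of_le hkn)]
  rcases le_total k w with hk | hk
  · exact hup hk (le_refl w) hk
  · exact hdown (le_refl w) hk hk

lemma pow_le_succ_mul_choose_mul_pow_mul_pow (hwn : w < n) :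
    n ^ n ≤ (n + 1) * (n.choose w * w ^ w * (n - w) ^ (n - w)) := by
  calc n ^ n = ∑ k ∈ range (n + 1), n.choose k * w ^ k * (n - w) ^ (n - k) := by
        rw [← Nat.add_sub_cancel' hwn.le, add_pow, Nat.add_sub_cancel' hwn.le]
        exact sum_congr rfl fun k _ => by rw [Nat.cast_id]; ring
    _ ≤ ∑ _k ∈ range (n + 1), n.choose w * w ^ w * (n - w) ^ (n - w) :=
        sum_le_sum fun k _ => choose_mul_pow_mul_pow_le_of_lt hwn k
    _ = _ := by rw [sum_const, card_range, smul_eq_mul]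

end BinomialMaxTerm

lemma binH_eq_binEntropy_div_log_two (x : ℝ) : binH x = binEntropy x / log 2 := by
  rw [binH, binEntropy_eq_negMulLog_add_negMulLog_one_sub, negMulLog, negMulLog, logb, logb]
  ring

lemma natCast_mul_binEntropy_div {n w : ℕ} (hw : 0 < w) (hwn : w < n) :
    n * binEntropy (w / n) = log ((n ^ n : ℕ) : ℝ) - log ((w ^ w * (n - w) ^ (n - w) : ℕ) : ℝ) := by
  have hn : (n : ℝ) ≠ 0 := Nat.cast_ne_zero.2 (by omega)
  have hsplit : ∀ k : ℕ, n * negMulLog (k / n) = negMulLog k + k * log n := fun k => by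
    have h := negMulLog_mul (k / n) n
    have hlog : (k : ℝ) / n * negMulLog n = -(k * log n) := by rw [negMulLog]; field_simp
    rw [div_mul_cancel₀ _ hn, hlog] at h
    linarith
  have h1 : 1 - (w : ℝ) / n = ((n - w : ℕ) : ℝ) / n := by
    rw [Nat.cast_sub hwn.le]; field_simp
  have hw0 : (w : ℝ) ≠ 0 := Nat.cast_ne_zero.2 hw.ne'
  have hnw : ((n - w : ℕ) : ℝ) ≠ 0 := Nat.cast_ne_zero.2 (by omega)
  have hsum : (w : ℝ) + ((n - w : ℕ) : ℝ) = n := by rw [Nat.cast_sub hwn.le]; ring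
  rw [binEntropy_eq_negMulLog_add_negMulLog_one_sub, h1, mul_add, hsplit, hsplit, Nat.cast_mul,
    Nat.cast_pow, Nat.cast_pow, Nat.cast_pow, log_mul (pow_ne_zero _ hw0) (pow_ne_zero _ hnw),
    log_pow, log_pow, log_pow, negMulLog, negMulLog, Nat.cast_sub hwn.le]
  rw [Nat.cast_sub hwn.le] at hsum
  linear_combination log n * hsum

section LogChoose

variable {n w : ℕ}

lemma log_choose_le (hw : 0 < w) (hwn : w < n) : log (n.choose w) ≤ n * binEntropy (w / n) := by
  have hC : 0 < n.choose w := Nat.choose_pos hwn.le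
  have hP : 0 < w ^ w * (n - w) ^ (n - w) :=
    Nat.mul_pos (Nat.pow_pos hw) (Nat.pow_pos (Nat.sub_pos_of_lt hwn))
  have h := choose_mul_pow_mul_pow_le_add_pow n w w (n - w)
  rw [Nat.add_sub_cancel' hwn.le, mul_assoc] at h
  rw [natCast_mul_binEntropy_div hw hwn, le_sub_iff_add_le, ← log_mul (by positivity)
    (by positivity), ← Nat.cast_mul]
  exact log_le_log (by positivity) (by exact_mod_cast h)

lemma mul_binEntropy_sub_log_succ_le_log_choose (hw : 0 < w) (hwn : w < n) :
    n * binEntropy (w / n) - log (n + 1) ≤ log (n.choose w) := by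
  have hC : 0 < n.choose w := Nat.choose_pos hwn.le
  have hP : 0 < w ^ w * (n - w) ^ (n - w) :=
    Nat.mul_pos (Nat.pow_pos hw) (Nat.pow_pos (Nat.sub_pos_of_lt hwn))
  have h : n ^ n ≤ n.choose w * (w ^ w * (n - w) ^ (n - w) * (n + 1)) :=
    (pow_le_succ_mul_choose_mul_pow_mul_pow hwn).trans_eq (by ring)
  rw [natCast_mul_binEntropy_div hw hwn, sub_sub, sub_le_iff_le_add, ← log_mul (by positivity)
    (by positivity), ← log_mul (by positivity) (by positivity)]
  exact log_le_log (Nat.cast_pos.2 (pow_pos (by omega) n)) (by exact_mod_cast h)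

end LogChoose

lemma log_avgSSredundant_mem_Icc {m L n w : ℕ} (hm : L ∣ m) (hw : 0 < w) (hwn : w < n)
    (hε : (m / L : ℕ) * ssErr L w ≤ 1 / 2) :
    log (avgSSredundant m L n w)
      ∈ Set.Icc (n * binEntropy (w / n) - log (2 * (n + 1))) (n * binEntropy (w / n)) := by
  have hC : (0 : ℝ) < n.choose w := Nat.cast_pos.2 (Nat.choose_pos hwn.le)
  have hlower : (n.choose w : ℝ) / 2 ≤ avgSSredundant m L n w :=
    le_trans (by nlinarith) (choose_mul_le_avgSSredundant hm)
  have hpos : 0 < avgSSredundant m L n w := lt_of_lt_of_le (by positivity) hlower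
  constructor
  · calc n * binEntropy (w / n) - log (2 * (n + 1))
        ≤ log (n.choose w) - log 2 := by
          rw [log_mul two_ne_zero (by positivity)]
          linarith [mul_binEntropy_sub_log_succ_le_log_choose hw hwn]
      _ = log ((n.choose w : ℝ) / 2) := (log_div hC.ne' two_ne_zero).symm
      _ ≤ log (avgSSredundant m L n w) := log_le_log (by positivity) hlower
  · exact (log_le_log hpos (avgSSredundant_le_choose hm)).trans (log_choose_le hw hwn)

lemma ssErr_floor_mul_le {μ ℓ : ℝ} (hμ : 0 ≤ μ) (hℓ : ℓ ≤ 1) (n : ℕ) :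
    ssErr ⌊μ * n⌋₊ ⌊ℓ * n⌋₊ ≤ 2 * n * (2 ^ (μ - ℓ) : ℝ) ^ n := by
  have hL : (⌊μ * n⌋₊ : ℝ) ≤ μ * n := Nat.floor_le (by positivity)
  have hw : ℓ * n - 1 < ⌊ℓ * n⌋₊ := by linarith [Nat.lt_floor_add_one (ℓ * n)]
  have hwn : (⌊ℓ * n⌋₊ : ℝ) ≤ n := by
    exact_mod_cast (Nat.floor_le_floor (by nlinarith [(Nat.cast_nonneg n : (0:ℝ) ≤ n)])).trans_eq
      (Nat.floor_natCast n)
  have hexp : (2 : ℝ) ^ ⌊μ * n⌋₊ / 2 ^ ⌊ℓ * n⌋₊ ≤ 2 * (2 ^ (μ - ℓ) : ℝ) ^ n := by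
    rw [← rpow_natCast, ← rpow_natCast, ← rpow_natCast, ← rpow_mul zero_le_two,
      ← rpow_sub two_pos]
    calc (2 : ℝ) ^ ((⌊μ * n⌋₊ : ℝ) - ⌊ℓ * n⌋₊) ≤ 2 ^ ((1 : ℝ) + (μ - ℓ) * n) :=
          rpow_le_rpow_of_exponent_le one_le_two (by linarith)
      _ = _ := by rw [rpow_add two_pos, rpow_one]
  calc ssErr ⌊μ * n⌋₊ ⌊ℓ * n⌋₊ ≤ (2 : ℝ) ^ ⌊μ * n⌋₊ / 2 ^ ⌊ℓ * n⌋₊ * ⌊ℓ * n⌋₊ := by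
        rw [ssErr, div_mul_eq_mul_div]
        exact div_le_div_of_nonneg_right
          (mul_le_mul_of_nonneg_right (sub_le_self _ zero_le_one) (Nat.cast_nonneg _))
          (by positivity)
    _ ≤ 2 * (2 ^ (μ - ℓ) : ℝ) ^ n * n := by gcongr
    _ = _ := by ring

lemma tendsto_log_two_mul_succ_div :
    Tendsto (fun n : ℕ => log (2 * (n + 1)) / n) atTop (𝓝 0) := by
  have h := (tendsto_pow_log_div_mul_add_atTop (1 / 2) (-1) 1 (by norm_num)).comp
    (tendsto_natCast_atTop_atTop.atTop_add (tendsto_const_nhds (x := (1 : ℝ)))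
      |>.const_mul_atTop two_pos)
  refine (h.congr fun n => ?_)
  simp only [Function.comp_apply, pow_one]
  ring_nf

section Asymptotics

variable {R μ ℓ : ℝ}

lemma eventually_log_avgSSredundant_mem_Icc (hR0 : 0 < R) (hμ0 : 0 < μ) (hl0 : 0 < ℓ)
    (hl1 : ℓ < 1) (hlμ : μ < ℓ) :
    ∀ᶠ n : ℕ in atTop, ⌊μ * n⌋₊ ∣ ⌊(1 - R) * n⌋₊ →
      log (avgSSredundant ⌊(1 - R) * n⌋₊ ⌊μ * n⌋₊ n ⌊ℓ * n⌋₊)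
        ∈ Set.Icc (n * binEntropy (⌊ℓ * n⌋₊ / n) - log (2 * (n + 1)))
            (n * binEntropy (⌊ℓ * n⌋₊ / n)) := by
  set r : ℝ := 2 ^ (μ - ℓ)
  have hr : |r| < 1 := by
    rw [abs_of_pos (by positivity)]
    exact rpow_lt_one_of_one_lt_of_neg one_lt_two (by linarith)
  have hsmall : Tendsto (fun n : ℕ => n * (2 * n * r ^ n)) atTop (𝓝 0) := by
    simpa [pow_two, mul_assoc, mul_left_comm] using
      (tendsto_pow_const_mul_const_pow_of_abs_lt_one 2 hr).const_mul 2
  have hw : ∀ᶠ n : ℕ in atTop, 1 ≤ ⌊ℓ * n⌋₊ :=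
    (tendsto_natCast_atTop_atTop.const_mul_atTop hl0).eventually_ge_atTop 1 |>.mono
      fun n hn => Nat.le_floor (by exact_mod_cast hn)
  filter_upwards [hsmall.eventually_le_const (by norm_num : (0 : ℝ) < 1 / 2), hw,
    eventually_gt_atTop 0] with n hεn hw_n hn hdvd
  have hwn : ⌊ℓ * n⌋₊ < n :=
    (Nat.floor_lt (by positivity)).2 (by nlinarith [(Nat.cast_pos.2 hn : (0 : ℝ) < n)])
  have hBn : ((⌊(1 - R) * n⌋₊ / ⌊μ * n⌋₊ : ℕ) : ℝ) ≤ n := by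
    refine Nat.cast_le.2 ((Nat.div_le_self _ _).trans ?_)
    exact (Nat.floor_le_floor (by nlinarith [(Nat.cast_nonneg n : (0 : ℝ) ≤ n)])).trans_eq
      (Nat.floor_natCast n)
  refine log_avgSSredundant_mem_Icc hdvd hw_n hwn ?_
  calc _ ≤ (n : ℝ) * (2 * n * r ^ n) :=
        mul_le_mul hBn (ssErr_floor_mul_le hμ0.le hl1.le n) (ssErr_nonneg _ _) (by positivity)
    _ ≤ 1 / 2 := hεn

lemma tendsto_log_avgSSredundant_div (hR0 : 0 < R) (hμ0 : 0 < μ) (hl0 : 0 < ℓ) (hl1 : ℓ < 1)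
    (hlμ : μ < ℓ) {ν : ℕ → ℕ} (hν : Tendsto ν atTop atTop)
    (hdvd : ∀ k, ⌊μ * ν k⌋₊ ∣ ⌊(1 - R) * ν k⌋₊) :
    Tendsto (fun k => log (avgSSredundant ⌊(1 - R) * ν k⌋₊ ⌊μ * ν k⌋₊ (ν k) ⌊ℓ * ν k⌋₊) / ν k)
      atTop (𝓝 (binEntropy ℓ)) := by
  have hH : Tendsto (fun n : ℕ => binEntropy (⌊ℓ * n⌋₊ / n)) atTop (𝓝 (binEntropy ℓ)) :=
    (binEntropy_continuous.tendsto ℓ).comp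
      ((tendsto_nat_floor_mul_div_atTop hl0.le).comp tendsto_natCast_atTop_atTop)
  have hlow := hH.sub tendsto_log_two_mul_succ_div
  rw [sub_zero] at hlow
  have hbounds : ∀ᶠ k in atTop,
      binEntropy (⌊ℓ * ν k⌋₊ / ν k) - log (2 * (ν k + 1)) / ν k
          ≤ log (avgSSredundant ⌊(1 - R) * ν k⌋₊ ⌊μ * ν k⌋₊ (ν k) ⌊ℓ * ν k⌋₊) / ν k
        ∧ log (avgSSredundant ⌊(1 - R) * ν k⌋₊ ⌊μ * ν k⌋₊ (ν k) ⌊ℓ * ν k⌋₊) / ν k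
          ≤ binEntropy (⌊ℓ * ν k⌋₊ / ν k) := by
    filter_upwards [hν.eventually (eventually_log_avgSSredundant_mem_Icc hR0 hμ0 hl0 hl1 hlμ),
      hν.eventually (eventually_gt_atTop 0)] with k hk hpos
    obtain ⟨hlo, hhi⟩ := hk (hdvd k)
    have hνk : (0 : ℝ) < ν k := Nat.cast_pos.2 hpos
    rw [le_div_iff₀ hνk, sub_mul, div_mul_cancel₀ _ hνk.ne', div_le_iff₀ hνk, mul_comm _ (ν k : ℝ)]
    exact ⟨hlo, hhi⟩
  exact tendsto_of_tendsto_of_tendsto_of_le_of_le' (hlow.comp hν) (hH.comp hν)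
    (hbounds.mono fun _ h => h.1) (hbounds.mono fun _ h => h.2)

end Asymptotics

theorem stmt19_general (R μ ℓ : ℝ) (hR0 : 0 < R) (hμ0 : 0 < μ)
    (hl0 : 0 < ℓ) (hl1 : ℓ < 1) (hlμ : μ < ℓ)
    (ν : ℕ → ℕ) (hν : Tendsto ν atTop atTop)
    (hdvd : ∀ k, ⌊μ * ν k⌋₊ ∣ ⌊(1 - R) * ν k⌋₊) :
    Tendsto (fun k =>
        (1 / (ν k : ℝ)) * Real.logb 2
          (avgSSredundant ⌊(1 - R) * ν k⌋₊ ⌊μ * ν k⌋₊ (ν k) ⌊ℓ * ν k⌋₊))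
      atTop (nhds (binH ℓ)) := by
  rw [binH_eq_binEntropy_div_log_two]
  refine ((tendsto_log_avgSSredundant_div hR0 hμ0 hl0 hl1 hlμ hν hdvd).div_const _).congr
    fun k => ?_
  rw [logb]
  ring

theorem stmt19 (R μ ℓ : ℝ) (hR0 : 0 < R) (hR1 : R < 1) (hμ0 : 0 < μ) (hμ : μ ≤ 1 - R)
    (hl0 : 0 < ℓ) (hl1 : ℓ < 1) (hlμ : μ < ℓ)
    (ν : ℕ → ℕ) (hν : Tendsto ν atTop atTop)
    (hdvd : ∀ k, ⌊μ * ν k⌋₊ ∣ ⌊(1 - R) * ν k⌋₊) :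
    Tendsto (fun k =>
        (1 / (ν k : ℝ)) * Real.logb 2
          (avgSSredundant ⌊(1 - R) * ν k⌋₊ ⌊μ * ν k⌋₊ (ν k) ⌊ℓ * ν k⌋₊))
      atTop (nhds (binH ℓ)) :=
  stmt19_general R μ ℓ hR0 hμ0 hl0 hl1 hlμ ν hν hdvd
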